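/- arXiv:1408.1376 — 3 statements merged into one kernel-verified Lean document; each statement's English description precedes it below -/
import Mathlib

section
/- Strengthened triangle inequality for matrices with columns drawn from two matrices: if A and B are real matrices each with m rows, and C is a matrix each of whose columns is a column of A or a column of B, then γ₂(C)² ≤ γ₂(A)² + γ₂(B)². -/
open Matrix Real

/-- `‖B‖_{2→∞}`: the largest Euclidean norm of a row of `B`. -/
noncomputable def rowNorm {m n : Type*} [Fintype m] [Fintype n] (B : Matrix m n ℝ) : ℝ :=
  ⨆ i, Real.sqrt (∑ j, B i j ^ 2)

/-- `‖C‖_{1→2}`: the largest Euclidean norm of a column of `C`. -/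
noncomputable def colNorm {m n : Type*} [Fintype m] [Fintype n] (C : Matrix m n ℝ) : ℝ :=
  ⨆ j, Real.sqrt (∑ i, C i j ^ 2)

/-- The `γ₂` factorization norm of a real matrix. -/
noncomputable def gamma2 {m n : Type*} [Fintype m] [Fintype n] (A : Matrix m n ℝ) : ℝ :=
  sInf {t | ∃ (k : ℕ) (B : Matrix m (Fin k) ℝ) (C : Matrix (Fin k) n ℝ),
    A = B * C ∧ t = rowNorm B * colNorm C}


lemma rowNorm_nonneg {m n : Type*} [Fintype m] [Fintype n] (B : Matrix m n ℝ) :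
    0 ≤ rowNorm B := Real.iSup_nonneg fun _ => Real.sqrt_nonneg _

lemma colNorm_nonneg {m n : Type*} [Fintype m] [Fintype n] (B : Matrix m n ℝ) :
    0 ≤ colNorm B := Real.iSup_nonneg fun _ => Real.sqrt_nonneg _

lemma sqrt_row_le {m n : Type*} [Fintype m] [Fintype n] (B : Matrix m n ℝ) (i : m) :
    Real.sqrt (∑ j, B i j ^ 2) ≤ rowNorm B := by
  unfold rowNorm
  exact le_ciSup (f := fun i => Real.sqrt (∑ j, B i j ^ 2))
    (Set.Finite.bddAbove (Set.finite_range _)) i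

lemma sqrt_col_le {m n : Type*} [Fintype m] [Fintype n] (B : Matrix m n ℝ) (j : n) :
    Real.sqrt (∑ i, B i j ^ 2) ≤ colNorm B := by
  unfold colNorm
  exact le_ciSup (f := fun j => Real.sqrt (∑ i, B i j ^ 2))
    (Set.Finite.bddAbove (Set.finite_range _)) j

lemma rowNorm_smul {m n : Type*} [Fintype m] [Fintype n] (B : Matrix m n ℝ) {c : ℝ}
    (hc : 0 ≤ c) : rowNorm (c • B) = c * rowNorm B := by
  rw [rowNorm, rowNorm, Real.mul_iSup_of_nonneg hc]
  congr 1; funext i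
  have : ∑ j, (c • B) i j ^ 2 = c ^ 2 * ∑ j, B i j ^ 2 := by
    rw [Finset.mul_sum]; congr 1; funext j
    simp [Matrix.smul_apply, smul_eq_mul, mul_pow]
  rw [this, Real.sqrt_mul (sq_nonneg c), Real.sqrt_sq hc]

lemma colNorm_smul {m n : Type*} [Fintype m] [Fintype n] (B : Matrix m n ℝ) {c : ℝ}
    (hc : 0 ≤ c) : colNorm (c • B) = c * colNorm B := by
  rw [colNorm, colNorm, Real.mul_iSup_of_nonneg hc]
  congr 1; funext j
  have : ∑ i, (c • B) i j ^ 2 = c ^ 2 * ∑ i, B i j ^ 2 := by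
    rw [Finset.mul_sum]; congr 1; funext i
    simp [Matrix.smul_apply, smul_eq_mul, mul_pow]
  rw [this, Real.sqrt_mul (sq_nonneg c), Real.sqrt_sq hc]

lemma gamma2_bddBelow {m n : Type*} [Fintype m] [Fintype n] (A : Matrix m n ℝ) :
    BddBelow {t | ∃ (k : ℕ) (B : Matrix m (Fin k) ℝ) (C : Matrix (Fin k) n ℝ),
      A = B * C ∧ t = rowNorm B * colNorm C} := by
  refine ⟨0, fun t ht => ?_⟩
  obtain ⟨k, B, C, -, rfl⟩ := ht
  exact mul_nonneg (rowNorm_nonneg B) (colNorm_nonneg C)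

lemma gamma2_le_fact {m n ι : Type*} [Fintype m] [Fintype n] [Fintype ι]
    (X : Matrix m n ℝ) (P : Matrix m ι ℝ) (Q : Matrix ι n ℝ) (h : X = P * Q) :
    gamma2 X ≤ rowNorm P * colNorm Q := by
  apply csInf_le (gamma2_bddBelow X)
  refine ⟨Fintype.card ι, P.submatrix id (Fintype.equivFin ι).symm,
    Q.submatrix (Fintype.equivFin ι).symm id, ?_, ?_⟩
  · rw [Matrix.submatrix_mul_equiv, h]; rfl
  · have h1 : rowNorm (P.submatrix id ⇑(Fintype.equivFin ι).symm) = rowNorm P := by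
      unfold rowNorm
      refine iSup_congr fun i => ?_
      congr 1
      exact Fintype.sum_equiv (Fintype.equivFin ι).symm _ _ (fun _ => rfl)
    have h2 : colNorm (Q.submatrix (⇑(Fintype.equivFin ι).symm) id) = colNorm Q := by
      unfold colNorm
      refine iSup_congr fun j => ?_
      congr 1
      exact Fintype.sum_equiv (Fintype.equivFin ι).symm _ _ (fun _ => rfl)
    rw [h1, h2]

lemma gamma2_nonneg {m n : ℕ} (X : Matrix (Fin m) (Fin n) ℝ) : 0 ≤ gamma2 X := by
  unfold gamma2
  refine le_csInf ?_ ?_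
  · exact ⟨_, n, X, 1, by rw [Matrix.mul_one], rfl⟩
  rintro t ⟨k, B, C, -, rfl⟩
  exact mul_nonneg (rowNorm_nonneg B) (colNorm_nonneg C)

/-- Normalized near-optimal factorization. -/
lemma exists_normalized {m n : ℕ} (X : Matrix (Fin m) (Fin n) ℝ) {ε : ℝ} (hε : 0 < ε) :
    ∃ (k : ℕ) (P : Matrix (Fin m) (Fin k) ℝ) (Q : Matrix (Fin k) (Fin n) ℝ),
      X = P * Q ∧ rowNorm P ≤ gamma2 X + ε ∧ colNorm Q ≤ 1 := by
  have hne : {t | ∃ (k : ℕ) (B : Matrix (Fin m) (Fin k) ℝ) (C : Matrix (Fin k) (Fin n) ℝ),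
      X = B * C ∧ t = rowNorm B * colNorm C}.Nonempty :=
    ⟨rowNorm X * colNorm (1 : Matrix (Fin n) (Fin n) ℝ), n, X, 1, by rw [Matrix.mul_one], rfl⟩
  have hlt : gamma2 X < gamma2 X + ε := lt_add_of_pos_right _ hε
  unfold gamma2 at hlt
  obtain ⟨t, ⟨k, P₀, Q₀, hfac, rfl⟩, ht⟩ := exists_lt_of_csInf_lt hne hlt
  rcases eq_or_lt_of_le (colNorm_nonneg Q₀) with hc | hc
  · -- colNorm Q₀ = 0, so Q₀ = 0 and X = 0
    have hQ0 : Q₀ = 0 := by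
      funext r j
      have h1 : Real.sqrt (∑ i, Q₀ i j ^ 2) ≤ 0 := hc ▸ sqrt_col_le Q₀ j
      have h2 : (∑ i, Q₀ i j ^ 2) = 0 := by
        have := Real.sqrt_eq_zero'.mp (le_antisymm h1 (Real.sqrt_nonneg _))
        have hs : 0 ≤ ∑ i, Q₀ i j ^ 2 := Finset.sum_nonneg fun _ _ => sq_nonneg _
        linarith [this]
      have := (Finset.sum_eq_zero_iff_of_nonneg (fun i _ => sq_nonneg (Q₀ i j))).mp h2
      simpa using pow_eq_zero_iff (n := 2) (by norm_num) |>.mp (this r (Finset.mem_univ r))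
    refine ⟨0, 0, 0, ?_, ?_, ?_⟩
    · rw [hfac, hQ0, Matrix.mul_zero, Matrix.mul_zero]
    · have : rowNorm (0 : Matrix (Fin m) (Fin 0) ℝ) = 0 := by
        apply le_antisymm ?_ (rowNorm_nonneg _)
        unfold rowNorm
        exact Real.iSup_le (fun i => by simp) le_rfl
      rw [this]; linarith [gamma2_nonneg X]
    · unfold colNorm
      exact Real.iSup_le (fun j => by simp) zero_le_one
  · -- colNorm Q₀ > 0
    set c := colNorm Q₀ with hcdef
    refine ⟨k, c • P₀, c⁻¹ • Q₀, ?_, ?_, ?_⟩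
    · rw [Matrix.smul_mul, Matrix.mul_smul, smul_smul, mul_inv_cancel₀ (ne_of_gt hc),
        one_smul, hfac]
    · rw [rowNorm_smul _ (le_of_lt hc), mul_comm]
      exact le_of_lt ht
    · rw [colNorm_smul _ (inv_nonneg.mpr (le_of_lt hc)), inv_mul_cancel₀ (ne_of_gt hc)]

/-- strengthened triangle inequality for a matrix whose columns are
drawn from the columns of  or of . -/
theorem gamma2_sq_union_cols {m na nb p : ℕ}
    (A : Matrix (Fin m) (Fin na) ℝ) (B : Matrix (Fin m) (Fin nb) ℝ)
    (C : Matrix (Fin m) (Fin p) ℝ)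
    (hC : ∀ j : Fin p, (∃ j' : Fin na, ∀ i, C i j = A i j') ∨
                       (∃ j' : Fin nb, ∀ i, C i j = B i j')) :
    gamma2 C ^ 2 ≤ gamma2 A ^ 2 + gamma2 B ^ 2 := by
  have key : ∀ ε : ℝ, 0 < ε →
      gamma2 C ^ 2 ≤ (gamma2 A + ε) ^ 2 + (gamma2 B + ε) ^ 2 := by
    intro ε hε
    obtain ⟨k, P, Q, hA, hP, hQ⟩ := exists_normalized A hε
    obtain ⟨k', P', Q', hB, hP', hQ'⟩ := exists_normalized B hε
    set Pc : Matrix (Fin m) (Fin k ⊕ Fin k') ℝ := fun i => Sum.elim (P i) (P' i) with hPcdef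
    have hsel : ∀ j : Fin p, ∃ q : (Fin k ⊕ Fin k') → ℝ,
        (∀ i, C i j = ∑ r, Pc i r * q r) ∧ Real.sqrt (∑ r, q r ^ 2) ≤ 1 := by
      intro j
      rcases hC j with ⟨j', hj'⟩ | ⟨j', hj'⟩
      · refine ⟨Sum.elim (fun r => Q r j') 0, fun i => ?_, ?_⟩
        · rw [hj' i, hA, Matrix.mul_apply, Fintype.sum_sum_type]
          simp [Pc]
        · rw [Fintype.sum_sum_type]
          have hz : ∑ r : Fin k', (Sum.elim (fun r => Q r j') (0 : Fin k' → ℝ)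
              (Sum.inr r)) ^ 2 = 0 := by simp
          rw [hz, add_zero]
          simpa using le_trans (sqrt_col_le Q j') hQ
      · refine ⟨Sum.elim 0 (fun r => Q' r j'), fun i => ?_, ?_⟩
        · rw [hj' i, hB, Matrix.mul_apply, Fintype.sum_sum_type]
          simp [Pc]
        · rw [Fintype.sum_sum_type]
          have hz : ∑ r : Fin k, (Sum.elim (0 : Fin k → ℝ) (fun r => Q' r j')
              (Sum.inl r)) ^ 2 = 0 := by simp
          rw [hz, zero_add]
          simpa using le_trans (sqrt_col_le Q' j') hQ'
    choose q hq1 hq2 using hsel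
    set Qc : Matrix (Fin k ⊕ Fin k') (Fin p) ℝ := fun r j => q j r with hQcdef
    have hfac : C = Pc * Qc := by
      funext i j
      rw [Matrix.mul_apply]
      exact hq1 j i
    have hrow : rowNorm Pc ≤ Real.sqrt (rowNorm P ^ 2 + rowNorm P' ^ 2) := by
      have hkey : ∀ i, Real.sqrt (∑ r, Pc i r ^ 2) ≤
          Real.sqrt (rowNorm P ^ 2 + rowNorm P' ^ 2) := by
        intro i
        apply Real.sqrt_le_sqrt
        rw [Fintype.sum_sum_type]
        have e1 : ∑ r : Fin k, Pc i (Sum.inl r) ^ 2 ≤ rowNorm P ^ 2 := by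
          have h1 := pow_le_pow_left₀ (Real.sqrt_nonneg _) (sqrt_row_le P i) 2
          rwa [Real.sq_sqrt (Finset.sum_nonneg fun _ _ => sq_nonneg _)] at h1
        have e2 : ∑ r : Fin k', Pc i (Sum.inr r) ^ 2 ≤ rowNorm P' ^ 2 := by
          have h1 := pow_le_pow_left₀ (Real.sqrt_nonneg _) (sqrt_row_le P' i) 2
          rwa [Real.sq_sqrt (Finset.sum_nonneg fun _ _ => sq_nonneg _)] at h1
        linarith
      exact Real.iSup_le hkey (Real.sqrt_nonneg _)
    have hcol : colNorm Qc ≤ 1 :=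
      Real.iSup_le (fun j => hq2 j) zero_le_one
    have h1 : gamma2 C ≤ Real.sqrt (rowNorm P ^ 2 + rowNorm P' ^ 2) := by
      calc gamma2 C ≤ rowNorm Pc * colNorm Qc := gamma2_le_fact C Pc Qc hfac
        _ ≤ Real.sqrt (rowNorm P ^ 2 + rowNorm P' ^ 2) * 1 :=
            mul_le_mul hrow hcol (colNorm_nonneg _) (Real.sqrt_nonneg _)
        _ = Real.sqrt (rowNorm P ^ 2 + rowNorm P' ^ 2) := mul_one _
    have h2 : gamma2 C ^ 2 ≤ rowNorm P ^ 2 + rowNorm P' ^ 2 := by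
      have h3 := pow_le_pow_left₀ (gamma2_nonneg C) h1 2
      rwa [Real.sq_sqrt (by positivity)] at h3
    have h4 : rowNorm P ^ 2 ≤ (gamma2 A + ε) ^ 2 := pow_le_pow_left₀ (rowNorm_nonneg P) hP 2
    have h5 : rowNorm P' ^ 2 ≤ (gamma2 B + ε) ^ 2 := pow_le_pow_left₀ (rowNorm_nonneg P') hP' 2
    linarith
  have hlim : Filter.Tendsto (fun ε : ℝ => (gamma2 A + ε) ^ 2 + (gamma2 B + ε) ^ 2)
      (nhdsWithin 0 (Set.Ioi 0)) (nhds (gamma2 A ^ 2 + gamma2 B ^ 2)) := by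
    have hcont : Continuous fun ε : ℝ => (gamma2 A + ε) ^ 2 + (gamma2 B + ε) ^ 2 := by
      continuity
    have := hcont.tendsto 0
    simpa using this.mono_left nhdsWithin_le_nhds
  exact ge_of_tendsto hlim (Filter.eventually_of_mem self_mem_nhdsWithin fun ε hε => key ε hε)
end

section
/- Weighted Binet–Cauchy bound: let A be a k×n real matrix and W a nonnegative diagonal n×n matrix with trace 1. Then there exists a k-element set J ⊆ [n] such that |det A_J|^{1/k} ≥ √(k/e)·|det(AWAᵀ)|^{1/(2k)}, where A_J denotes the k×k submatrix of A consisting of columns indexed by J. -/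
open Matrix Real

open Finset Equiv

lemma det_rect_mul {k n : ℕ} (M : Matrix (Fin k) (Fin n) ℝ) (N : Matrix (Fin n) (Fin k) ℝ) :
    det (M * N) = ∑ p : Fin k → Fin n, (∏ i, N (p i) i) * det (M.submatrix id p) := by
  calc
    det (M * N) = ∑ p : Fin k → Fin n, ∑ σ : Perm (Fin k),
        ((Perm.sign σ : ℤ) : ℝ) * ∏ i, M (σ i) (p i) * N (p i) i := by
      simp only [det_apply', mul_apply, Finset.prod_univ_sum, Finset.mul_sum,
        Fintype.piFinset_univ]
      rw [Finset.sum_comm]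
    _ = _ := by
      refine Finset.sum_congr rfl fun p _ => ?_
      rw [det_apply', Finset.mul_sum]
      refine Finset.sum_congr rfl fun σ _ => ?_
      simp only [submatrix_apply, id_eq, Finset.prod_mul_distrib]
      ring

lemma det_sub_zero {k n : ℕ} (M : Matrix (Fin k) (Fin n) ℝ) {p : Fin k → Fin n}
    (hp : ¬ Function.Injective p) : det (M.submatrix id p) = 0 := by
  rw [Function.not_injective_iff] at hp
  obtain ⟨i, j, hij, hne⟩ := hp
  exact det_zero_of_column_eq hne (fun l => by simp [hij])

open scoped Classical in
lemma det_AWAT {k n : ℕ} (A : Matrix (Fin k) (Fin n) ℝ) (w : Fin n → ℝ) :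
    det (A * Matrix.diagonal w * Aᵀ) =
      ∑ p ∈ Finset.univ.filter (fun p : Fin k → Fin n => Function.Injective p),
        (∏ i, w (p i)) * ((∏ i, A i (p i)) * det (A.submatrix id p)) := by
  rw [Matrix.mul_assoc, det_rect_mul]
  have h1 : ∀ p : Fin k → Fin n,
      (∏ i, (Matrix.diagonal w * Aᵀ) (p i) i) * det (A.submatrix id p)
      = (∏ i, w (p i)) * ((∏ i, A i (p i)) * det (A.submatrix id p)) := by
    intro p
    simp only [mul_apply, diagonal_apply, transpose_apply, ite_mul, zero_mul]
    rw [Finset.prod_congr rfl (fun i _ => Finset.sum_eq_single (p i)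
      (fun b _ hb => if_neg (fun h => hb h.symm)) (by simp))]
    simp only [if_true, Finset.prod_mul_distrib]
    ring
  simp_rw [h1]
  symm
  apply Finset.sum_filter_of_ne
  intro p _ h
  by_contra hp
  rw [det_sub_zero A hp] at h
  simp at h

open scoped Classical in
lemma symmetrize {k n : ℕ} (A : Matrix (Fin k) (Fin n) ℝ) (w : Fin n → ℝ) :
    ∑ p ∈ Finset.univ.filter (fun p : Fin k → Fin n => Function.Injective p),
      (∏ i, w (p i)) * det (A.submatrix id p) ^ 2
    = (k.factorial : ℝ) *
      ∑ p ∈ Finset.univ.filter (fun p : Fin k → Fin n => Function.Injective p),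
        (∏ i, w (p i)) * ((∏ i, A i (p i)) * det (A.submatrix id p)) := by
  have expand : ∀ p : Fin k → Fin n, (∏ i, w (p i)) * det (A.submatrix id p) ^ 2
      = ∑ σ : Equiv.Perm (Fin k), ((Equiv.Perm.sign σ : ℤ) : ℝ) * (∏ i, w (p i)) *
          (∏ i, A (σ i) (p i)) * det (A.submatrix id p) := by
    intro p
    have hdet : det (A.submatrix id p)
        = ∑ σ : Equiv.Perm (Fin k), ((Equiv.Perm.sign σ : ℤ) : ℝ) * ∏ i, A (σ i) (p i) := by
      rw [det_apply']
      simp [submatrix_apply]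
    rw [sq]
    nth_rewrite 1 [hdet]
    rw [Finset.sum_mul, Finset.mul_sum]
    refine Finset.sum_congr rfl fun σ _ => by ring
  simp_rw [expand]
  rw [Finset.sum_comm]
  have hinner : ∀ σ : Equiv.Perm (Fin k),
      ∑ p ∈ Finset.univ.filter (fun p : Fin k → Fin n => Function.Injective p),
        ((Equiv.Perm.sign σ : ℤ) : ℝ) * (∏ i, w (p i)) *
          (∏ i, A (σ i) (p i)) * det (A.submatrix id p)
      = ∑ p ∈ Finset.univ.filter (fun p : Fin k → Fin n => Function.Injective p),
        (∏ i, w (p i)) * ((∏ i, A i (p i)) * det (A.submatrix id p)) := by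
    intro σ
    refine Finset.sum_nbij' (fun q => q ∘ ⇑σ⁻¹) (fun q => q ∘ ⇑σ) ?_ ?_ ?_ ?_ ?_
    · intro q hq
      simp only [Finset.mem_filter, Finset.mem_univ, true_and] at hq ⊢
      exact hq.comp (Equiv.injective _)
    · intro q hq
      simp only [Finset.mem_filter, Finset.mem_univ, true_and] at hq ⊢
      exact hq.comp (Equiv.injective _)
    · intro q _; ext i; simp
    · intro q _; ext i; simp
    · intro q _
      have h1 : (∏ i, w (q i)) = ∏ i, w ((q ∘ ⇑σ⁻¹) i) := by
        rw [← Equiv.prod_comp σ⁻¹ (fun i => w (q i))]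
        simp [Function.comp]
      have h2 : (∏ i, A (σ i) (q i)) = ∏ i, A i ((q ∘ ⇑σ⁻¹) i) := by
        rw [← Equiv.prod_comp σ (fun i => A i ((q ∘ ⇑σ⁻¹) i))]
        simp [Function.comp]
      have h3 : det (A.submatrix id q)
          = ((Equiv.Perm.sign σ : ℤ) : ℝ) * det (A.submatrix id (q ∘ ⇑σ⁻¹)) := by
        have : A.submatrix id q = (A.submatrix id (q ∘ ⇑σ⁻¹)).submatrix id ⇑σ := by
          rw [submatrix_submatrix]
          congr 1
          ext i; simp
        rw [this, det_permute']
      have hsgn : ((Equiv.Perm.sign σ : ℤ) : ℝ) * ((Equiv.Perm.sign σ : ℤ) : ℝ) = 1 := by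
        rcases Int.units_eq_one_or (Equiv.Perm.sign σ) with h | h <;> simp [h]
      calc ((Equiv.Perm.sign σ : ℤ) : ℝ) * (∏ i, w (q i)) *
            (∏ i, A (σ i) (q i)) * det (A.submatrix id q)
          = (((Equiv.Perm.sign σ : ℤ) : ℝ) * ((Equiv.Perm.sign σ : ℤ) : ℝ)) *
            ((∏ i, w ((q ∘ ⇑σ⁻¹) i)) * ((∏ i, A i ((q ∘ ⇑σ⁻¹) i)) *
              det (A.submatrix id (q ∘ ⇑σ⁻¹)))) := by
            rw [h1, h2, h3]; ring
        _ = _ := by rw [hsgn, one_mul]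
  simp_rw [hinner]
  rw [Finset.sum_const, Finset.card_univ, Fintype.card_perm, nsmul_eq_mul, Fintype.card_fin]

open scoped Classical in
lemma key_ineq {k n : ℕ} (hkn : k ≤ n)
    (A : Matrix (Fin k) (Fin n) ℝ) (w : Fin n → ℝ)
    (hw : ∀ j, 0 ≤ w j) (hw1 : ∑ j, w j = 1) :
    ∃ g : Fin k → Fin n, Function.Injective g ∧
      det (A * Matrix.diagonal w * Aᵀ) * (k.factorial : ℝ)
        ≤ det (A.submatrix id g) ^ 2 := by
  set I := Finset.univ.filter (fun p : Fin k → Fin n => Function.Injective p) with hI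
  have hne : I.Nonempty := ⟨Fin.castLE hkn, by simp [hI, Fin.castLE_injective hkn]⟩
  obtain ⟨g, hgI, hgmax⟩ := Finset.exists_max_image I
    (fun p => det (A.submatrix id p) ^ 2) hne
  have hginj : Function.Injective g := (Finset.mem_filter.mp hgI).2
  refine ⟨g, hginj, ?_⟩
  have hwprod : ∀ p : Fin k → Fin n, 0 ≤ ∏ i, w (p i) :=
    fun p => Finset.prod_nonneg fun i _ => hw (p i)
  calc det (A * Matrix.diagonal w * Aᵀ) * (k.factorial : ℝ)
      = ∑ p ∈ I, (∏ i, w (p i)) * det (A.submatrix id p) ^ 2 := by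
        rw [symmetrize, det_AWAT]; ring
    _ ≤ ∑ p ∈ I, (∏ i, w (p i)) * det (A.submatrix id g) ^ 2 := by
        refine Finset.sum_le_sum fun p hp => ?_
        exact mul_le_mul_of_nonneg_left (hgmax p hp) (hwprod p)
    _ = (∑ p ∈ I, ∏ i, w (p i)) * det (A.submatrix id g) ^ 2 := by
        rw [Finset.sum_mul]
    _ ≤ 1 * det (A.submatrix id g) ^ 2 := by
        refine mul_le_mul_of_nonneg_right ?_ (sq_nonneg _)
        calc ∑ p ∈ I, ∏ i, w (p i)
            ≤ ∑ p : Fin k → Fin n, ∏ i, w (p i) :=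
              Finset.sum_le_sum_of_subset_of_nonneg (Finset.filter_subset _ _)
                (fun p _ _ => hwprod p)
          _ = ∏ _i : Fin k, ∑ j, w j := by
              rw [Finset.prod_univ_sum]; simp [Fintype.piFinset_univ]
          _ = 1 := by simp [hw1]
    _ = det (A.submatrix id g) ^ 2 := one_mul _

open scoped Classical in
lemma det_AWAT_nonneg {k n : ℕ} (A : Matrix (Fin k) (Fin n) ℝ) (w : Fin n → ℝ)
    (hw : ∀ j, 0 ≤ w j) : 0 ≤ det (A * Matrix.diagonal w * Aᵀ) := by
  have h := symmetrize A w
  rw [← det_AWAT] at h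
  have hsum : 0 ≤ ∑ p ∈ Finset.univ.filter (fun p : Fin k → Fin n => Function.Injective p),
      (∏ i, w (p i)) * det (A.submatrix id p) ^ 2 :=
    Finset.sum_nonneg fun p _ => mul_nonneg
      (Finset.prod_nonneg fun i _ => hw (p i)) (sq_nonneg _)
  have hfac : (0 : ℝ) < (k.factorial : ℝ) := by exact_mod_cast k.factorial_pos
  nlinarith [hsum, h, hfac]

lemma fact_bound (k : ℕ) : ((k : ℝ) / Real.exp 1) ^ k ≤ (k.factorial : ℝ) := by
  have hterm : (k : ℝ) ^ k / (k.factorial : ℝ) ≤ Real.exp k := by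
    calc (k : ℝ) ^ k / (k.factorial : ℝ)
        ≤ ∑ i ∈ Finset.range (k + 1), (k : ℝ) ^ i / (i.factorial : ℝ) :=
          Finset.single_le_sum (f := fun i => (k : ℝ) ^ i / (i.factorial : ℝ)) (fun i _ => by positivity)
            (Finset.self_mem_range_succ k)
      _ ≤ Real.exp k := Real.sum_le_exp_of_nonneg (Nat.cast_nonneg k) (k + 1)
  have hfac : (0 : ℝ) < (k.factorial : ℝ) := by exact_mod_cast k.factorial_pos
  rw [div_pow, div_le_iff₀ (by positivity), ← Real.exp_nat_mul]
  rw [div_le_iff₀ hfac] at hterm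
  calc (k : ℝ) ^ k ≤ Real.exp k * (k.factorial : ℝ) := hterm
    _ = (k.factorial : ℝ) * Real.exp ((k : ℝ) * 1) := by rw [mul_one]; ring

private theorem weighted_binet_cauchy' {k n : ℕ} (hk : 0 < k) (hkn : k ≤ n)
    (A : Matrix (Fin k) (Fin n) ℝ) (w : Fin n → ℝ)
    (hw : ∀ j, 0 ≤ w j) (hw1 : ∑ j, w j = 1) :
    ∃ g : Fin k → Fin n, Function.Injective g ∧
      Real.sqrt ((k : ℝ) / Real.exp 1) *
        |(A * Matrix.diagonal w * Aᵀ).det| ^ ((1 : ℝ) / (2 * k)) ≤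
      |(A.submatrix id g).det| ^ ((1 : ℝ) / k) := by
  obtain ⟨g, hginj, hle⟩ := key_ineq hkn A w hw hw1
  refine ⟨g, hginj, ?_⟩
  set D := (A * Matrix.diagonal w * Aᵀ).det with hD
  set d := |(A.submatrix id g).det| with hd
  have hd0 : 0 ≤ d := abs_nonneg _
  have hfac : (0 : ℝ) < (k.factorial : ℝ) := by exact_mod_cast k.factorial_pos
  have hD0 : 0 ≤ D := det_AWAT_nonneg A w hw
  have hc : (0 : ℝ) ≤ (k : ℝ) / Real.exp 1 := by positivity
  have hkey : D * ((k : ℝ) / Real.exp 1) ^ k ≤ d ^ 2 := by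
    calc D * ((k : ℝ) / Real.exp 1) ^ k ≤ D * (k.factorial : ℝ) :=
          mul_le_mul_of_nonneg_left (fact_bound k) hD0
      _ ≤ (A.submatrix id g).det ^ 2 := hle
      _ = d ^ 2 := (sq_abs _).symm
  have habsD : |D| = D := abs_of_nonneg hD0
  have hkR : (0 : ℝ) < (k : ℝ) := by exact_mod_cast hk
  have hexp : (0 : ℝ) ≤ 1 / (2 * (k : ℝ)) := by positivity
  have hmono : (D * ((k : ℝ) / Real.exp 1) ^ k) ^ ((1 : ℝ) / (2 * k))
      ≤ (d ^ 2) ^ ((1 : ℝ) / (2 * k)) :=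
    Real.rpow_le_rpow (by positivity) hkey hexp
  have hlhs : (D * ((k : ℝ) / Real.exp 1) ^ k) ^ ((1 : ℝ) / (2 * k))
      = Real.sqrt ((k : ℝ) / Real.exp 1) * |D| ^ ((1 : ℝ) / (2 * k)) := by
    rw [Real.mul_rpow hD0 (by positivity), habsD]
    rw [← Real.rpow_natCast ((k : ℝ) / Real.exp 1) k, ← Real.rpow_mul hc]
    have : (k : ℝ) * (1 / (2 * k)) = 1 / 2 := by field_simp
    rw [this, ← Real.sqrt_eq_rpow]
    ring
  have hrhs : (d ^ 2) ^ ((1 : ℝ) / (2 * k)) = d ^ ((1 : ℝ) / k) := by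
    rw [← Real.rpow_natCast d 2, ← Real.rpow_mul hd0]
    congr 1
    push_cast
    field_simp
  rw [hlhs] at hmono
  rw [hrhs] at hmono
  exact hmono

/-- weighted Binet–Cauchy bound. -/
theorem weighted_binet_cauchy {k n : ℕ} (hk : 0 < k) (hkn : k ≤ n)
    (A : Matrix (Fin k) (Fin n) ℝ) (w : Fin n → ℝ)
    (hw : ∀ j, 0 ≤ w j) (hw1 : ∑ j, w j = 1) :
    ∃ g : Fin k → Fin n, Function.Injective g ∧
      Real.sqrt ((k : ℝ) / Real.exp 1) *
        |(A * Matrix.diagonal w * Aᵀ).det| ^ ((1 : ℝ) / (2 * k)) ≤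
      |(A.submatrix id g).det| ^ ((1 : ℝ) / k) := by
  exact weighted_binet_cauchy' hk hkn A w hw hw1
end

section
/- The singular values of the n×n lower triangular all-ones matrix Tₙ are 1/(2 sin((2j−1)π/(4n+2))) for j = 1,…,n. -/
/-! For any angle `θ`, the partial sums of `v k = cos ((2k+1)θ)` telescope to
`sin (2(k+1)θ) / (2 sin θ)`, and the tail sums of these telescope back to
`(cos ((2k+1)θ) - cos ((2n+1)θ)) / (2 sin θ)²`. So when `cos ((2n+1)θ) = 0`, `v` is an
eigenvector of `Tₙᵀ Tₙ` with eigenvalue `(2 sin θ)⁻²`. The `n` angles `θⱼ = (2j+1)π/(4n+2)`,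
`j < n`, lie in `(0, π/2)` and so give `n` distinct eigenvalues, which must be all the eigenvalues
of the symmetric `n × n` matrix `Tₙᵀ Tₙ`. -/

open Matrix Real

/-- `Tₙ`: the n×n lower triangular all-ones matrix. -/
def T (n : ℕ) : Matrix (Fin n) (Fin n) ℝ :=
  Matrix.of fun i j => if j ≤ i then 1 else 0

open Finset

theorem Matrix.mem_spectrum_of_mulVec_eq_smul {K ι : Type*} [Field K] [Fintype ι] [DecidableEq ι]
    {A : Matrix ι ι K} {v : ι → K} {μ : K} (hv : v ≠ 0) (h : A *ᵥ v = μ • v) :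
    μ ∈ spectrum K A := by
  rw [← spectrum_toLin', ← Module.End.hasEigenvalue_iff_mem_spectrum]
  exact Module.End.hasEigenvalue_of_hasEigenvector
    ⟨by rw [Module.End.mem_eigenspace_iff, toLin'_apply, h], hv⟩

theorem Matrix.IsHermitian.exists_perm_eigenvalues_eq {𝕜 ι : Type*} [RCLike 𝕜] [Fintype ι]
    [DecidableEq ι] {A : Matrix ι ι 𝕜} (hA : A.IsHermitian) {f : ι → ℝ}
    (hf : Function.Injective f) (hspec : ∀ j, f j ∈ spectrum ℝ A) :
    ∃ σ : Equiv.Perm ι, ∀ i, hA.eigenvalues i = f (σ i) := by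
  simp only [hA.spectrum_real_eq_range_eigenvalues, Set.mem_range] at hspec
  choose g hg using hspec
  have hg_bij : Function.Bijective g :=
    Finite.injective_iff_bijective.1 fun a b hab => hf (by rw [← hg, hab, hg])
  refine ⟨(Equiv.ofBijective g hg_bij).symm, fun i => ?_⟩
  conv_lhs => rw [← Equiv.ofBijective_apply_symm_apply g hg_bij i]
  exact hg _

theorem two_mul_sin_mul_sum_range_cos (α : ℝ) (m : ℕ) :
    2 * sin α * ∑ k ∈ range m, cos ((2 * k + 1) * α) = sin (2 * m * α) := by
  induction m with
  | zero => simp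
  | succ m ih =>
    rw [sum_range_succ, mul_add, ih, two_mul_sin_mul_cos,
      show α - (2 * m + 1) * α = -(2 * m * α) by ring, sin_neg]
    push_cast
    ring_nf

theorem two_mul_sin_mul_sum_Ico_sin (α : ℝ) {i n : ℕ} (h : i ≤ n) :
    2 * sin α * ∑ k ∈ Ico i n, sin (2 * (k + 1) * α) =
      cos ((2 * i + 1) * α) - cos ((2 * n + 1) * α) := by
  induction n, h using Nat.le_induction with
  | base => simp
  | succ n hin ih =>
    rw [sum_Ico_succ_top hin, mul_add, ih, two_mul_sin_mul_sin,
      show α - 2 * (n + 1) * α = -((2 * n + 1) * α) by ring, cos_neg]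
    push_cast
    ring_nf

theorem T_mulVec_apply {n : ℕ} (v : ℕ → ℝ) (i : Fin n) :
    (T n *ᵥ fun k => v k) i = ∑ k ∈ range (i + 1), v k := by
  simp only [mulVec, dotProduct, T, of_apply, Fin.le_def, ite_mul, one_mul, zero_mul]
  rw [Fin.sum_univ_eq_sum_range (fun k => if k ≤ (i : ℕ) then v k else 0), ← sum_filter]
  congr 1
  ext k
  simp only [mem_filter, mem_range]
  omega

theorem T_transpose_mulVec_apply {n : ℕ} (v : ℕ → ℝ) (i : Fin n) :
    ((T n)ᵀ *ᵥ fun k => v k) i = ∑ k ∈ Ico (i : ℕ) n, v k := by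
  simp only [mulVec, dotProduct, transpose_apply, T, of_apply, Fin.le_def, ite_mul, one_mul,
    zero_mul]
  rw [Fin.sum_univ_eq_sum_range (fun k => if (i : ℕ) ≤ k then v k else 0), ← sum_filter]
  congr 1
  ext k
  simp only [mem_filter, mem_range, mem_Ico]
  omega

theorem transpose_T_mul_T_mulVec_cos {n : ℕ} (α : ℝ) (i : Fin n) :
    (2 * sin α) ^ 2 * (((T n)ᵀ * T n) *ᵥ fun k => cos ((2 * (k : ℕ) + 1) * α)) i =
      cos ((2 * i + 1) * α) - cos ((2 * n + 1) * α) := by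
  have hT : (2 * sin α) • (T n *ᵥ fun k => cos ((2 * (k : ℕ) + 1) * α)) =
      fun k : Fin n => sin (2 * ((k : ℕ) + 1) * α) := by
    ext k
    rw [Pi.smul_apply, smul_eq_mul, T_mulVec_apply (fun k => cos ((2 * k + 1) * α)),
      two_mul_sin_mul_sum_range_cos]
    push_cast
    ring_nf
  calc (2 * sin α) ^ 2 * (((T n)ᵀ * T n) *ᵥ fun k => cos ((2 * (k : ℕ) + 1) * α)) i
      = 2 * sin α * ((T n)ᵀ *ᵥ (2 * sin α) • (T n *ᵥ fun k => cos ((2 * (k : ℕ) + 1) * α))) i := by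
        rw [← mulVec_mulVec, mulVec_smul, Pi.smul_apply, smul_eq_mul]
        ring
    _ = 2 * sin α * ∑ k ∈ Ico (i : ℕ) n, sin (2 * (k + 1) * α) := by
        rw [hT, T_transpose_mulVec_apply (fun k => sin (2 * (k + 1) * α))]
    _ = cos ((2 * i + 1) * α) - cos ((2 * n + 1) * α) := two_mul_sin_mul_sum_Ico_sin α i.is_lt.le

noncomputable def theta (n j : ℕ) : ℝ := (2 * j + 1) * π / (4 * n + 2)

theorem theta_pos (n j : ℕ) : 0 < theta n j := by
  unfold theta
  positivity

theorem theta_lt_pi_div_two {n j : ℕ} (h : j < n) : theta n j < π / 2 := by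
  have hj : (j : ℝ) + 1 ≤ n := by exact_mod_cast h
  rw [theta, div_lt_div_iff₀ (by positivity) two_pos]
  nlinarith [pi_pos]

theorem cos_two_mul_add_one_mul_theta (n j : ℕ) : cos ((2 * n + 1) * theta n j) = 0 := by
  rw [cos_eq_zero_iff]
  refine ⟨j, ?_⟩
  rw [theta]
  push_cast
  field_simp
  ring

theorem sin_theta_pos {n j : ℕ} (h : j < n) : 0 < sin (theta n j) :=
  sin_pos_of_pos_of_lt_pi (theta_pos n j) ((theta_lt_pi_div_two h).trans (by linarith [pi_pos]))

theorem strictMono_sin_theta (n : ℕ) : StrictMono fun j : Fin n => sin (theta n j) := by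
  intro a b hab
  refine strictMonoOn_sin ⟨?_, (theta_lt_pi_div_two a.is_lt).le⟩
    ⟨?_, (theta_lt_pi_div_two b.is_lt).le⟩ ?_
  · linarith [theta_pos n a, pi_pos]
  · linarith [theta_pos n b, pi_pos]
  · have hab' : (a : ℝ) < b := by exact_mod_cast hab
    unfold theta
    gcongr

theorem inv_sq_two_mul_sin_theta_mem_spectrum {n j : ℕ} (h : j < n) :
    ((2 * sin (theta n j)) ^ 2)⁻¹ ∈ spectrum ℝ ((T n)ᵀ * T n) := by
  refine mem_spectrum_of_mulVec_eq_smul (v := fun k : Fin n => cos ((2 * (k : ℕ) + 1) * theta n j))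
    (Function.ne_iff.2 ⟨⟨0, by omega⟩, ?_⟩) (funext fun i => ?_)
  · simpa using (cos_pos_of_mem_Ioo ⟨by linarith [theta_pos n j, pi_pos],
      theta_lt_pi_div_two h⟩).ne'
  · have := transpose_T_mul_T_mulVec_cos (theta n j) i
    rw [cos_two_mul_add_one_mul_theta, sub_zero] at this
    have hsin := sin_theta_pos h
    rw [Pi.smul_apply, smul_eq_mul, ← this, inv_mul_cancel_left₀ (by positivity)]

theorem injective_inv_sq_two_mul_sin_theta (n : ℕ) :
    Function.Injective fun j : Fin n => ((2 * sin (theta n j)) ^ 2)⁻¹ := by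
  intro a b hab
  have ha := sin_theta_pos a.is_lt
  have hb := sin_theta_pos b.is_lt
  rw [_root_.inv_inj, pow_left_inj₀ (by positivity) (by positivity) two_ne_zero,
    mul_right_inj' two_ne_zero] at hab
  exact (strictMono_sin_theta n).injective hab

/-- the singular values of `Tₙ` (the square roots of the eigenvalues
of `Tₙᵀ * Tₙ`) are `1/(2 sin((2j−1)π/(4n+2)))`, `j = 1,…,n`. -/
theorem singularValues_T (n : ℕ) :
    ∃ σ : Equiv.Perm (Fin n), ∀ i : Fin n,
      Real.sqrt ((show ((T n)ᵀ * T n).IsHermitian by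
        rw [Matrix.IsHermitian, Matrix.conjTranspose_mul, Matrix.conjTranspose_eq_transpose_of_trivial,
          Matrix.conjTranspose_eq_transpose_of_trivial, Matrix.transpose_transpose]).eigenvalues i) =
        1 / (2 * Real.sin ((2 * ((σ i : ℕ) : ℝ) + 1) * Real.pi / (4 * n + 2))) := by
  have hA : ((T n)ᵀ * T n).IsHermitian := by
    simpa only [conjTranspose_eq_transpose_of_trivial] using
      isHermitian_conjTranspose_mul_self (T n)
  obtain ⟨σ, hσ⟩ := hA.exists_perm_eigenvalues_eq (injective_inv_sq_two_mul_sin_theta n)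
    fun j => inv_sq_two_mul_sin_theta_mem_spectrum j.is_lt
  refine ⟨σ, fun i => ?_⟩
  rw [hσ, sqrt_inv, sqrt_sq (by have := sin_theta_pos (σ i).is_lt; positivity), one_div, theta]
end
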